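/- The negation-left rule is admissible in cut-free gTS4: if Γ ⊢ Δ, α is provable in cut-free gTS4, then ¬α, Γ ⊢ Δ is provable in cut-free gTS4. -/
import Mathlib


inductive Fml : Type
  | var : ℕ → Fml
  | and : Fml → Fml → Fml
  | or  : Fml → Fml → Fml
  | imp : Fml → Fml → Fml
  | neg : Fml → Fml
  | box : Fml → Fml
  | dia : Fml → Fml
  deriving DecidableEq

open Fml

abbrev Ctx := Finset Fml

/-- □Γ -/
def boxS (Γ : Ctx) : Ctx := Γ.image Fml.box
/-- ◇Γ -/
def diaS (Γ : Ctx) : Ctx := Γ.image Fml.dia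
/-- ¬□Γ -/
def nboxS (Γ : Ctx) : Ctx := Γ.image (fun g => Fml.neg (Fml.box g))
/-- ¬◇Γ -/
def ndiaS (Γ : Ctx) : Ctx := Γ.image (fun g => Fml.neg (Fml.dia g))

/-- The global twist sequent calculus gTS4; the Boolean index is `true` iff cut is allowed. -/
inductive gTS4 : Bool → Ctx → Ctx → Prop
  | initV (c : Bool) (p : ℕ) : gTS4 c {var p} {var p}
  | initNV (c : Bool) (p : ℕ) : gTS4 c {neg (var p)} {neg (var p)}
  | initL (c : Bool) (p : ℕ) : gTS4 c {neg (var p), var p} ∅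
  | initR (c : Bool) (p : ℕ) : gTS4 c ∅ {neg (var p), var p}
  | cut (Γ Δ : Ctx) (α : Fml) :
      gTS4 true Γ {α} → gTS4 true (insert α Γ) Δ → gTS4 true Γ Δ
  | weL (c Γ Δ α) : gTS4 c Γ Δ → gTS4 c (insert α Γ) Δ
  | weR (c Γ Δ α) : gTS4 c Γ Δ → gTS4 c Γ (insert α Δ)
  | andL (c Γ Δ α β) : gTS4 c (insert α (insert β Γ)) Δ → gTS4 c (insert (α.and β) Γ) Δ
  | andR (c Γ Δ α β) : gTS4 c Γ (insert α Δ) → gTS4 c Γ (insert β Δ) →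
      gTS4 c Γ (insert (α.and β) Δ)
  | orL (c Γ Δ α β) : gTS4 c (insert α Γ) Δ → gTS4 c (insert β Γ) Δ →
      gTS4 c (insert (α.or β) Γ) Δ
  | orR (c Γ Δ α β) : gTS4 c Γ (insert α (insert β Δ)) → gTS4 c Γ (insert (α.or β) Δ)
  | impL (c Γ Δ α β) : gTS4 c Γ (insert α Δ) → gTS4 c (insert β Γ) Δ →
      gTS4 c (insert (α.imp β) Γ) Δ
  | impR (c Γ Δ α β) : gTS4 c (insert α Γ) (insert β Δ) → gTS4 c Γ (insert (α.imp β) Δ)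
  | boxL (c Γ Δ α) : gTS4 c (insert α Γ) Δ → gTS4 c (insert α.box Γ) Δ
  | boxRT (c Γ₁ Γ₂ Δ₁ Δ₂ α) :
      gTS4 c (boxS Γ₁ ∪ boxS Δ₂) (insert α (diaS Δ₁ ∪ diaS Γ₂)) →
      gTS4 c (boxS Γ₁ ∪ ndiaS Γ₂) (insert α.box (diaS Δ₁ ∪ nboxS Δ₂))
  | diaLT (c Γ₁ Γ₂ Δ₁ Δ₂ α) :
      gTS4 c (insert α (boxS Γ₁ ∪ boxS Δ₂)) (diaS Δ₁ ∪ diaS Γ₂) →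
      gTS4 c (insert α.dia (boxS Γ₁ ∪ ndiaS Γ₂)) (diaS Δ₁ ∪ nboxS Δ₂)
  | diaR (c Γ Δ α) : gTS4 c Γ (insert α Δ) → gTS4 c Γ (insert α.dia Δ)
  | nnL (c Γ Δ α) : gTS4 c (insert α Γ) Δ → gTS4 c (insert α.neg.neg Γ) Δ
  | nnR (c Γ Δ α) : gTS4 c Γ (insert α Δ) → gTS4 c Γ (insert α.neg.neg Δ)
  | nandL (c Γ Δ α β) : gTS4 c Γ (insert α Δ) → gTS4 c Γ (insert β Δ) →
      gTS4 c (insert (α.and β).neg Γ) Δ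
  | nandR (c Γ Δ α β) : gTS4 c (insert α (insert β Γ)) Δ → gTS4 c Γ (insert (α.and β).neg Δ)
  | norL (c Γ Δ α β) : gTS4 c Γ (insert α (insert β Δ)) → gTS4 c (insert (α.or β).neg Γ) Δ
  | norR (c Γ Δ α β) : gTS4 c (insert α Γ) Δ → gTS4 c (insert β Γ) Δ →
      gTS4 c Γ (insert (α.or β).neg Δ)
  | nimpL (c Γ Δ α β) : gTS4 c (insert α Γ) (insert β Δ) → gTS4 c (insert (α.imp β).neg Γ) Δ
  | nimpR (c Γ Δ α β) : gTS4 c Γ (insert α Δ) → gTS4 c (insert β Γ) Δ →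
      gTS4 c Γ (insert (α.imp β).neg Δ)
  | nboxLT (c Γ₁ Γ₂ Δ₁ Δ₂ α) :
      gTS4 c (boxS Γ₁ ∪ boxS Δ₂) (insert α (diaS Δ₁ ∪ diaS Γ₂)) →
      gTS4 c (insert α.box.neg (boxS Γ₁ ∪ ndiaS Γ₂)) (diaS Δ₁ ∪ nboxS Δ₂)
  | nboxR (c Γ Δ α) : gTS4 c (insert α Γ) Δ → gTS4 c Γ (insert α.box.neg Δ)
  | ndiaL (c Γ Δ α) : gTS4 c Γ (insert α Δ) → gTS4 c (insert α.dia.neg Γ) Δ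
  | ndiaRT (c Γ₁ Γ₂ Δ₁ Δ₂ α) :
      gTS4 c (insert α (boxS Γ₁ ∪ boxS Δ₂)) (diaS Δ₁ ∪ diaS Γ₂) →
      gTS4 c (boxS Γ₁ ∪ ndiaS Γ₂) (insert α.dia.neg (diaS Δ₁ ∪ nboxS Δ₂))

section NegLeftAdm
open Fml

private def nS (S : Ctx) : Ctx := S.image Fml.neg

private lemma gTS4.eqseq {c} {Γ Δ Γ' Δ' : Ctx} (h : gTS4 c Γ Δ) (h1 : Γ = Γ')
    (h2 : Δ = Δ') : gTS4 c Γ' Δ' := h1 ▸ h2 ▸ h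

private lemma gTS4.monoL {c} {Γ Δ : Ctx} (h : gTS4 c Γ Δ) (T : Ctx) : gTS4 c (T ∪ Γ) Δ := by
  classical
  induction T using Finset.induction_on with
  | empty => simpa using h
  | @insert a T ha ih => exact (gTS4.weL _ _ _ a ih).eqseq (Finset.insert_union _ _ _).symm rfl

private lemma gTS4.monoR {c} {Γ Δ : Ctx} (h : gTS4 c Γ Δ) (T : Ctx) : gTS4 c Γ (T ∪ Δ) := by
  classical
  induction T using Finset.induction_on with
  | empty => simpa using h
  | @insert a T ha ih => exact (gTS4.weR _ _ _ a ih).eqseq rfl (Finset.insert_union _ _ _).symm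

private lemma gTS4.mono {c} {Γ Δ Γ' Δ' : Ctx} (h : gTS4 c Γ Δ) (h1 : Γ ⊆ Γ')
    (h2 : Δ ⊆ Δ') : gTS4 c Γ' Δ' := by
  have h3 := (h.monoL Γ').monoR Δ'
  rwa [Finset.union_eq_left.mpr h1, Finset.union_eq_left.mpr h2] at h3

private lemma nnboxL {c} {X Δ : Ctx} (B : Ctx) (h : gTS4 c (boxS B ∪ X) Δ) :
    gTS4 c (B.image (fun d => ((Fml.box d).neg).neg) ∪ X) Δ := by
  classical
  induction B using Finset.induction_on generalizing X with
  | empty => simpa [boxS] using h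
  | @insert d B hd ih =>
      have h1 : gTS4 c (boxS B ∪ insert (Fml.box d) X) Δ :=
        h.eqseq (by simp [boxS, Finset.image_insert, Finset.union_insert, Finset.insert_union]) rfl
      have h2 := ih h1
      have h3 : gTS4 c (insert (Fml.box d) (B.image (fun d => ((Fml.box d).neg).neg) ∪ X)) Δ :=
        h2.eqseq (by simp [Finset.union_insert]) rfl
      have h4 := gTS4.nnL c (B.image (fun d => ((Fml.box d).neg).neg) ∪ X) Δ (Fml.box d) h3
      exact h4.eqseq (by simp [Finset.image_insert, Finset.insert_union]) rfl

private lemma ext1 {a : Fml} {Δ₀ S Δ : Ctx} (hs : Δ₀ ⊆ S ∪ Δ) :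
    insert a Δ₀ ⊆ S ∪ insert a Δ :=
  Finset.insert_subset_iff.2 ⟨Finset.mem_union_right _ (Finset.mem_insert_self _ _),
    hs.trans (Finset.union_subset_union_right (Finset.subset_insert _ _))⟩

private lemma ext1' {a : Fml} {Δ₀ S Δ : Ctx} (hs : Δ₀ ⊆ S ∪ Δ) :
    insert a Δ₀ ⊆ insert a S ∪ Δ :=
  Finset.insert_subset_iff.2 ⟨Finset.mem_union_left _ (Finset.mem_insert_self _ _),
    hs.trans (Finset.union_subset_union_left (Finset.subset_insert _ _))⟩


private lemma popIns {c} {X Γ Δ : Ctx} {a : Fml} (h : gTS4 c (X ∪ insert a Γ) Δ) :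
    gTS4 c (insert a (X ∪ Γ)) Δ := h.eqseq (Finset.union_insert _ _ _) rfl

private lemma popIns2 {c} {X Γ Δ : Ctx} {a b : Fml} (h : gTS4 c (X ∪ insert a (insert b Γ)) Δ) :
    gTS4 c (insert a (insert b (X ∪ Γ))) Δ := h.eqseq (by simp only [Finset.union_insert]) rfl

private lemma coreBox {Γ₁ Γ₂ Δ₁ Δ₂ : Ctx} {a : Fml}
    (h : gTS4 false (boxS Γ₁ ∪ boxS Δ₂) (insert a (diaS Δ₁ ∪ diaS Γ₂)))
    (S Δ : Ctx)
    (hd1 : ∀ d ∈ Δ₁, Fml.dia d ∈ S ∪ Δ) (hd2 : ∀ d ∈ Δ₂, (Fml.box d).neg ∈ S ∪ Δ) :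
    gTS4 false (nS S ∪ (boxS Γ₁ ∪ ndiaS Γ₂)) (insert a.box Δ) ∧
    gTS4 false (insert (Fml.box a).neg (nS S ∪ (boxS Γ₁ ∪ ndiaS Γ₂))) Δ := by
  classical
  set A := Δ₁.filter (fun d => Fml.dia d ∉ Δ) with hA
  set Δ₁' := Δ₁.filter (fun d => Fml.dia d ∈ Δ) with hΔ₁'
  set B := Δ₂.filter (fun d => (Fml.box d).neg ∉ Δ) with hB
  set Δ₂' := Δ₂.filter (fun d => (Fml.box d).neg ∈ Δ) with hΔ₂'
  have hAS : ∀ d ∈ A, Fml.dia d ∈ S := by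
    intro d hd
    have h1 := Finset.mem_filter.1 hd
    rcases Finset.mem_union.1 (hd1 d h1.1) with h2 | h2
    · exact h2
    · exact absurd h2 h1.2
  have hBS : ∀ d ∈ B, (Fml.box d).neg ∈ S := by
    intro d hd
    have h1 := Finset.mem_filter.1 hd
    rcases Finset.mem_union.1 (hd2 d h1.1) with h2 | h2
    · exact h2
    · exact absurd h2 h1.2
  have e1 : Γ₁ ∪ Δ₂ = (Γ₁ ∪ B) ∪ Δ₂' := by
    ext x
    simp only [Finset.mem_union, hB, hΔ₂', Finset.mem_filter]
    tauto
  have e2 : Δ₁ ∪ Γ₂ = Δ₁' ∪ (Γ₂ ∪ A) := by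
    ext x
    simp only [Finset.mem_union, hA, hΔ₁', Finset.mem_filter]
    tauto
  have eBox : boxS Γ₁ ∪ boxS Δ₂ = boxS (Γ₁ ∪ B) ∪ boxS Δ₂' := by
    simp only [boxS, ← Finset.image_union, e1]
  have eDia : diaS Δ₁ ∪ diaS Γ₂ = diaS Δ₁' ∪ diaS (Γ₂ ∪ A) := by
    simp only [diaS, ← Finset.image_union, e2]
  have h' : gTS4 false (boxS (Γ₁ ∪ B) ∪ boxS Δ₂')
      (insert a (diaS Δ₁' ∪ diaS (Γ₂ ∪ A))) := h.eqseq eBox (by rw [eDia])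
  have ectx : boxS (Γ₁ ∪ B) ∪ ndiaS (Γ₂ ∪ A)
      = boxS B ∪ ((boxS Γ₁ ∪ ndiaS Γ₂) ∪ ndiaS A) := by
    ext x
    simp only [boxS, ndiaS, Finset.image_union, Finset.mem_union]
    tauto
  have subL : B.image (fun d => ((Fml.box d).neg).neg) ∪ ((boxS Γ₁ ∪ ndiaS Γ₂) ∪ ndiaS A)
      ⊆ nS S ∪ (boxS Γ₁ ∪ ndiaS Γ₂) := by
    intro x hx
    rcases Finset.mem_union.1 hx with hx | hx
    · obtain ⟨d, hd, rfl⟩ := Finset.mem_image.1 hx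
      exact Finset.mem_union_left _ (Finset.mem_image_of_mem _ (hBS d hd))
    · rcases Finset.mem_union.1 hx with hx | hx
      · exact Finset.mem_union_right _ hx
      · obtain ⟨d, hd, rfl⟩ := Finset.mem_image.1 hx
        exact Finset.mem_union_left _ (Finset.mem_image_of_mem _ (hAS d hd))
  have subR : diaS Δ₁' ∪ nboxS Δ₂' ⊆ Δ := by
    intro x hx
    rcases Finset.mem_union.1 hx with hx | hx
    · obtain ⟨d, hd, rfl⟩ := Finset.mem_image.1 hx
      exact (Finset.mem_filter.1 hd).2
    · obtain ⟨d, hd, rfl⟩ := Finset.mem_image.1 hx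
      exact (Finset.mem_filter.1 hd).2
  constructor
  · have hbr := gTS4.boxRT false (Γ₁ ∪ B) (Γ₂ ∪ A) Δ₁' Δ₂' a h'
    have hbr2 := nnboxL B (hbr.eqseq ectx rfl)
    exact hbr2.mono subL (Finset.insert_subset_insert _ subR)
  · have hnb := gTS4.nboxLT false (Γ₁ ∪ B) (Γ₂ ∪ A) Δ₁' Δ₂' a h'
    have hnb2 : gTS4 false (boxS B ∪ insert (Fml.box a).neg ((boxS Γ₁ ∪ ndiaS Γ₂) ∪ ndiaS A))
        (diaS Δ₁' ∪ nboxS Δ₂') :=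
      hnb.eqseq (by rw [ectx, Finset.union_insert]) rfl
    have hnb3 := nnboxL B hnb2
    refine hnb3.mono ?_ subR
    intro x hx
    rcases Finset.mem_union.1 hx with hx | hx
    · obtain ⟨d, hd, rfl⟩ := Finset.mem_image.1 hx
      exact Finset.mem_insert_of_mem (Finset.mem_union_left _ (Finset.mem_image_of_mem _ (hBS d hd)))
    · rcases Finset.mem_insert.1 hx with rfl | hx
      · exact Finset.mem_insert_self _ _
      · rcases Finset.mem_union.1 hx with hx | hx
        · exact Finset.mem_insert_of_mem (Finset.mem_union_right _ hx)
        · obtain ⟨d, hd, rfl⟩ := Finset.mem_image.1 hx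
          exact Finset.mem_insert_of_mem (Finset.mem_union_left _ (Finset.mem_image_of_mem _ (hAS d hd)))

private lemma coreDia {Γ₁ Γ₂ Δ₁ Δ₂ : Ctx} {a : Fml}
    (h : gTS4 false (insert a (boxS Γ₁ ∪ boxS Δ₂)) (diaS Δ₁ ∪ diaS Γ₂))
    (S Δ : Ctx)
    (hd1 : ∀ d ∈ Δ₁, Fml.dia d ∈ S ∪ Δ) (hd2 : ∀ d ∈ Δ₂, (Fml.box d).neg ∈ S ∪ Δ) :
    gTS4 false (nS S ∪ (boxS Γ₁ ∪ ndiaS Γ₂)) (insert (Fml.dia a).neg Δ) ∧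
    gTS4 false (insert a.dia (nS S ∪ (boxS Γ₁ ∪ ndiaS Γ₂))) Δ := by
  classical
  set A := Δ₁.filter (fun d => Fml.dia d ∉ Δ) with hA
  set Δ₁' := Δ₁.filter (fun d => Fml.dia d ∈ Δ) with hΔ₁'
  set B := Δ₂.filter (fun d => (Fml.box d).neg ∉ Δ) with hB
  set Δ₂' := Δ₂.filter (fun d => (Fml.box d).neg ∈ Δ) with hΔ₂'
  have hAS : ∀ d ∈ A, Fml.dia d ∈ S := by
    intro d hd
    have h1 := Finset.mem_filter.1 hd
    rcases Finset.mem_union.1 (hd1 d h1.1) with h2 | h2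
    · exact h2
    · exact absurd h2 h1.2
  have hBS : ∀ d ∈ B, (Fml.box d).neg ∈ S := by
    intro d hd
    have h1 := Finset.mem_filter.1 hd
    rcases Finset.mem_union.1 (hd2 d h1.1) with h2 | h2
    · exact h2
    · exact absurd h2 h1.2
  have e1 : Γ₁ ∪ Δ₂ = (Γ₁ ∪ B) ∪ Δ₂' := by
    ext x
    simp only [Finset.mem_union, hB, hΔ₂', Finset.mem_filter]
    tauto
  have e2 : Δ₁ ∪ Γ₂ = Δ₁' ∪ (Γ₂ ∪ A) := by
    ext x
    simp only [Finset.mem_union, hA, hΔ₁', Finset.mem_filter]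
    tauto
  have eBox : boxS Γ₁ ∪ boxS Δ₂ = boxS (Γ₁ ∪ B) ∪ boxS Δ₂' := by
    simp only [boxS, ← Finset.image_union, e1]
  have eDia : diaS Δ₁ ∪ diaS Γ₂ = diaS Δ₁' ∪ diaS (Γ₂ ∪ A) := by
    simp only [diaS, ← Finset.image_union, e2]
  have h' : gTS4 false (insert a (boxS (Γ₁ ∪ B) ∪ boxS Δ₂'))
      (diaS Δ₁' ∪ diaS (Γ₂ ∪ A)) := h.eqseq (by rw [eBox]) eDia
  have ectx : boxS (Γ₁ ∪ B) ∪ ndiaS (Γ₂ ∪ A)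
      = boxS B ∪ ((boxS Γ₁ ∪ ndiaS Γ₂) ∪ ndiaS A) := by
    ext x
    simp only [boxS, ndiaS, Finset.image_union, Finset.mem_union]
    tauto
  have subL : B.image (fun d => ((Fml.box d).neg).neg) ∪ ((boxS Γ₁ ∪ ndiaS Γ₂) ∪ ndiaS A)
      ⊆ nS S ∪ (boxS Γ₁ ∪ ndiaS Γ₂) := by
    intro x hx
    rcases Finset.mem_union.1 hx with hx | hx
    · obtain ⟨d, hd, rfl⟩ := Finset.mem_image.1 hx
      exact Finset.mem_union_left _ (Finset.mem_image_of_mem _ (hBS d hd))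
    · rcases Finset.mem_union.1 hx with hx | hx
      · exact Finset.mem_union_right _ hx
      · obtain ⟨d, hd, rfl⟩ := Finset.mem_image.1 hx
        exact Finset.mem_union_left _ (Finset.mem_image_of_mem _ (hAS d hd))
  have subR : diaS Δ₁' ∪ nboxS Δ₂' ⊆ Δ := by
    intro x hx
    rcases Finset.mem_union.1 hx with hx | hx
    · obtain ⟨d, hd, rfl⟩ := Finset.mem_image.1 hx
      exact (Finset.mem_filter.1 hd).2
    · obtain ⟨d, hd, rfl⟩ := Finset.mem_image.1 hx
      exact (Finset.mem_filter.1 hd).2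
  constructor
  · have hdr := gTS4.ndiaRT false (Γ₁ ∪ B) (Γ₂ ∪ A) Δ₁' Δ₂' a h'
    have hdr2 := nnboxL B (hdr.eqseq ectx rfl)
    exact hdr2.mono subL (Finset.insert_subset_insert _ subR)
  · have hdl := gTS4.diaLT false (Γ₁ ∪ B) (Γ₂ ∪ A) Δ₁' Δ₂' a h'
    have hdl2 : gTS4 false (boxS B ∪ insert a.dia ((boxS Γ₁ ∪ ndiaS Γ₂) ∪ ndiaS A))
        (diaS Δ₁' ∪ nboxS Δ₂') :=
      hdl.eqseq (by rw [ectx, Finset.union_insert]) rfl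
    have hdl3 := nnboxL B hdl2
    refine hdl3.mono ?_ subR
    intro x hx
    rcases Finset.mem_union.1 hx with hx | hx
    · obtain ⟨d, hd, rfl⟩ := Finset.mem_image.1 hx
      exact Finset.mem_insert_of_mem (Finset.mem_union_left _ (Finset.mem_image_of_mem _ (hBS d hd)))
    · rcases Finset.mem_insert.1 hx with rfl | hx
      · exact Finset.mem_insert_self _ _
      · rcases Finset.mem_union.1 hx with hx | hx
        · exact Finset.mem_insert_of_mem (Finset.mem_union_right _ hx)
        · obtain ⟨d, hd, rfl⟩ := Finset.mem_image.1 hx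
          exact Finset.mem_insert_of_mem (Finset.mem_union_left _ (Finset.mem_image_of_mem _ (hAS d hd)))


private lemma key {c} {Γ Δ' : Ctx} (h : gTS4 c Γ Δ') :
    c = false → ∀ S Δt : Ctx, Δ' ⊆ S ∪ Δt → gTS4 false (nS S ∪ Γ) Δt := by
  classical
  induction h with
  | initV c p =>
      intro hc S Δt hsub
      have hm := hsub (Finset.mem_singleton_self _)
      rcases Finset.mem_union.1 hm with hS | hΔ
      · refine (gTS4.initL false p).mono ?_ (Finset.empty_subset _)
        intro x hx
        rcases Finset.mem_insert.1 hx with rfl | hx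
        · exact Finset.mem_union_left _ (Finset.mem_image_of_mem _ hS)
        · rw [Finset.mem_singleton] at hx
          subst hx
          exact Finset.mem_union_right _ (Finset.mem_singleton_self _)
      · exact (gTS4.initV false p).mono Finset.subset_union_right
          (Finset.singleton_subset_iff.2 hΔ)
  | initNV c p =>
      intro hc S Δt hsub
      have hm := hsub (Finset.mem_singleton_self _)
      rcases Finset.mem_union.1 hm with hS | hΔ
      · have d0 : gTS4 false (insert (var p) {neg (var p)}) ∅ :=
          (gTS4.initL false p).eqseq (Finset.pair_comm _ _) rfl
        have d1 := gTS4.nnL false {neg (var p)} ∅ (var p) d0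
        refine d1.mono ?_ (Finset.empty_subset _)
        intro x hx
        rcases Finset.mem_insert.1 hx with rfl | hx
        · exact Finset.mem_union_left _ (Finset.mem_image_of_mem _ hS)
        · exact Finset.mem_union_right _ hx
      · exact (gTS4.initNV false p).mono Finset.subset_union_right
          (Finset.singleton_subset_iff.2 hΔ)
  | initL c p =>
      intro hc S Δt hsub
      exact (gTS4.initL false p).mono Finset.subset_union_right (Finset.empty_subset _)
  | initR c p =>
      intro hc S Δt hsub
      have hm1 : neg (var p) ∈ S ∪ Δt := hsub (Finset.mem_insert_self _ _)
      have hm2 : var p ∈ S ∪ Δt :=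
        hsub (Finset.mem_insert_of_mem (Finset.mem_singleton_self _))
      rcases Finset.mem_union.1 hm1 with hn | hn
      · rcases Finset.mem_union.1 hm2 with hv | hv
        · -- both in S : derive {¬¬p, ¬p} ⊢ ∅
          have d0 : gTS4 false (insert (var p) {neg (var p)}) ∅ :=
            (gTS4.initL false p).eqseq (Finset.pair_comm _ _) rfl
          have d1 := gTS4.nnL false {neg (var p)} ∅ (var p) d0
          refine d1.mono ?_ (Finset.empty_subset _)
          intro x hx
          rcases Finset.mem_insert.1 hx with rfl | hx
          · exact Finset.mem_union_left _ (Finset.mem_image_of_mem _ hn)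
          · rw [Finset.mem_singleton] at hx
            subst hx
            exact Finset.mem_union_left _ (Finset.mem_image_of_mem _ hv)
        · -- ¬p ∈ S, p ∈ Δt : {¬¬p} ⊢ {p}
          have d1 := gTS4.nnL false ∅ {var p} (var p) (gTS4.initV false p)
          refine d1.mono ?_ (Finset.singleton_subset_iff.2 hv)
          intro x hx
          rcases Finset.mem_insert.1 hx with rfl | hx
          · exact Finset.mem_union_left _ (Finset.mem_image_of_mem _ hn)
          · exact absurd hx (Finset.notMem_empty _)
      · rcases Finset.mem_union.1 hm2 with hv | hv
        · -- ¬p ∈ Δt, p ∈ S : {¬p} ⊢ {¬p}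
          refine (gTS4.initNV false p).mono ?_ (Finset.singleton_subset_iff.2 hn)
          intro x hx
          rw [Finset.mem_singleton] at hx
          subst hx
          exact Finset.mem_union_left _ (Finset.mem_image_of_mem _ hv)
        · refine (gTS4.initR false p).mono (Finset.empty_subset _) ?_
          intro x hx
          rcases Finset.mem_insert.1 hx with rfl | hx
          · exact hn
          · rw [Finset.mem_singleton] at hx
            subst hx
            exact hv
  | cut Γ Δ a h1 h2 ih1 ih2 =>
      intro hc
      exact absurd hc (by simp)
  | weL c Γ Δ0 b hp ih =>
      intro hc S Δt hsub
      exact (gTS4.weL false (nS S ∪ Γ) Δt b (ih hc S Δt hsub)).eqseq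
        (Finset.union_insert _ _ _).symm rfl
  | weR c Γ Δ0 b hp ih =>
      intro hc S Δt hsub
      exact ih hc S Δt ((Finset.insert_subset_iff.1 hsub).2)
  | andL c Γ Δ0 a b hp ih =>
      intro hc S Δt hsub
      have j := popIns2 (ih hc S Δt hsub)
      exact (gTS4.andL false (nS S ∪ Γ) Δt a b j).eqseq (Finset.union_insert _ _ _).symm rfl
  | andR c Γ Δ0 a b h1 h2 ih1 ih2 =>
      intro hc S Δt hsub
      obtain ⟨hmem, hrest⟩ := Finset.insert_subset_iff.1 hsub
      have j1 := ih1 hc S (insert a Δt) (ext1 hrest)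
      have j2 := ih2 hc S (insert b Δt) (ext1 hrest)
      rcases Finset.mem_union.1 hmem with hS | hΔ
      · exact (gTS4.nandL false (nS S ∪ Γ) Δt a b j1 j2).eqseq
          (Finset.insert_eq_self.2 (Finset.mem_union_left _ (Finset.mem_image_of_mem _ hS))) rfl
      · exact (gTS4.andR false (nS S ∪ Γ) Δt a b j1 j2).eqseq rfl (Finset.insert_eq_self.2 hΔ)
  | orL c Γ Δ0 a b h1 h2 ih1 ih2 =>
      intro hc S Δt hsub
      have j1 := popIns (ih1 hc S Δt hsub)
      have j2 := popIns (ih2 hc S Δt hsub)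
      exact (gTS4.orL false (nS S ∪ Γ) Δt a b j1 j2).eqseq
        (Finset.union_insert _ _ _).symm rfl
  | orR c Γ Δ0 a b hp ih =>
      intro hc S Δt hsub
      obtain ⟨hmem, hrest⟩ := Finset.insert_subset_iff.1 hsub
      have j := ih hc S (insert a (insert b Δt)) (ext1 (ext1 hrest))
      rcases Finset.mem_union.1 hmem with hS | hΔ
      · exact (gTS4.norL false (nS S ∪ Γ) Δt a b j).eqseq
          (Finset.insert_eq_self.2 (Finset.mem_union_left _ (Finset.mem_image_of_mem _ hS))) rfl
      · exact (gTS4.orR false (nS S ∪ Γ) Δt a b j).eqseq rfl (Finset.insert_eq_self.2 hΔ)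
  | impL c Γ Δ0 a b h1 h2 ih1 ih2 =>
      intro hc S Δt hsub
      have j1 := ih1 hc S (insert a Δt) (ext1 hsub)
      have j2 := popIns (ih2 hc S Δt hsub)
      exact (gTS4.impL false (nS S ∪ Γ) Δt a b j1 j2).eqseq
        (Finset.union_insert _ _ _).symm rfl
  | impR c Γ Δ0 a b hp ih =>
      intro hc S Δt hsub
      obtain ⟨hmem, hrest⟩ := Finset.insert_subset_iff.1 hsub
      have j := popIns (ih hc S (insert b Δt) (ext1 hrest))
      rcases Finset.mem_union.1 hmem with hS | hΔ
      · exact (gTS4.nimpL false (nS S ∪ Γ) Δt a b j).eqseq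
          (Finset.insert_eq_self.2 (Finset.mem_union_left _ (Finset.mem_image_of_mem _ hS))) rfl
      · exact (gTS4.impR false (nS S ∪ Γ) Δt a b j).eqseq rfl (Finset.insert_eq_self.2 hΔ)
  | boxL c Γ Δ0 a hp ih =>
      intro hc S Δt hsub
      have j := popIns (ih hc S Δt hsub)
      exact (gTS4.boxL false (nS S ∪ Γ) Δt a j).eqseq (Finset.union_insert _ _ _).symm rfl
  | boxRT c Γ₁ Γ₂ Δ₁ Δ₂ a hp ih =>
      intro hc S Δt hsub
      obtain ⟨hmem, hrest⟩ := Finset.insert_subset_iff.1 hsub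
      have hd1 : ∀ d ∈ Δ₁, Fml.dia d ∈ S ∪ Δt := fun d hd =>
        hrest (Finset.mem_union_left _ (Finset.mem_image_of_mem _ hd))
      have hd2 : ∀ d ∈ Δ₂, (Fml.box d).neg ∈ S ∪ Δt := fun d hd =>
        hrest (Finset.mem_union_right _ (Finset.mem_image_of_mem _ hd))
      have hcore := coreBox (hc ▸ hp) S Δt hd1 hd2
      rcases Finset.mem_union.1 hmem with hS | hΔ
      · exact hcore.2.eqseq
          (Finset.insert_eq_self.2 (Finset.mem_union_left _ (Finset.mem_image_of_mem _ hS))) rfl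
      · exact hcore.1.eqseq rfl (Finset.insert_eq_self.2 hΔ)
  | diaLT c Γ₁ Γ₂ Δ₁ Δ₂ a hp ih =>
      intro hc S Δt hsub
      have hd1 : ∀ d ∈ Δ₁, Fml.dia d ∈ S ∪ Δt := fun d hd =>
        hsub (Finset.mem_union_left _ (Finset.mem_image_of_mem _ hd))
      have hd2 : ∀ d ∈ Δ₂, (Fml.box d).neg ∈ S ∪ Δt := fun d hd =>
        hsub (Finset.mem_union_right _ (Finset.mem_image_of_mem _ hd))
      exact ((coreDia (hc ▸ hp) S Δt hd1 hd2).2).eqseq (Finset.union_insert _ _ _).symm rfl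
  | diaR c Γ Δ0 a hp ih =>
      intro hc S Δt hsub
      obtain ⟨hmem, hrest⟩ := Finset.insert_subset_iff.1 hsub
      have j := ih hc S (insert a Δt) (ext1 hrest)
      rcases Finset.mem_union.1 hmem with hS | hΔ
      · exact (gTS4.ndiaL false (nS S ∪ Γ) Δt a j).eqseq
          (Finset.insert_eq_self.2 (Finset.mem_union_left _ (Finset.mem_image_of_mem _ hS))) rfl
      · exact (gTS4.diaR false (nS S ∪ Γ) Δt a j).eqseq rfl (Finset.insert_eq_self.2 hΔ)
  | nnL c Γ Δ0 a hp ih =>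
      intro hc S Δt hsub
      have j := popIns (ih hc S Δt hsub)
      exact (gTS4.nnL false (nS S ∪ Γ) Δt a j).eqseq (Finset.union_insert _ _ _).symm rfl
  | nnR c Γ Δ0 a hp ih =>
      intro hc S Δt hsub
      obtain ⟨hmem, hrest⟩ := Finset.insert_subset_iff.1 hsub
      rcases Finset.mem_union.1 hmem with hS | hΔ
      · have j : gTS4 false (insert a.neg (nS S ∪ Γ)) Δt :=
          (ih hc (insert a S) Δt (ext1' hrest)).eqseq
            (by simp [nS, Finset.image_insert, Finset.insert_union]) rfl
        have j2 := gTS4.nnL false (nS S ∪ Γ) Δt a.neg j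
        exact j2.eqseq
          (Finset.insert_eq_self.2 (Finset.mem_union_left _ (Finset.mem_image_of_mem _ hS))) rfl
      · have j := ih hc S (insert a Δt) (ext1 hrest)
        exact (gTS4.nnR false (nS S ∪ Γ) Δt a j).eqseq rfl (Finset.insert_eq_self.2 hΔ)
  | nandL c Γ Δ0 a b h1 h2 ih1 ih2 =>
      intro hc S Δt hsub
      have j1 := ih1 hc S (insert a Δt) (ext1 hsub)
      have j2 := ih2 hc S (insert b Δt) (ext1 hsub)
      exact (gTS4.nandL false (nS S ∪ Γ) Δt a b j1 j2).eqseq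
        (Finset.union_insert _ _ _).symm rfl
  | nandR c Γ Δ0 a b hp ih =>
      intro hc S Δt hsub
      obtain ⟨hmem, hrest⟩ := Finset.insert_subset_iff.1 hsub
      have j := popIns2 (ih hc S Δt hrest)
      rcases Finset.mem_union.1 hmem with hS | hΔ
      · have k := gTS4.nnL false (nS S ∪ Γ) Δt (a.and b) (gTS4.andL false (nS S ∪ Γ) Δt a b j)
        exact k.eqseq
          (Finset.insert_eq_self.2 (Finset.mem_union_left _ (Finset.mem_image_of_mem _ hS))) rfl
      · exact (gTS4.nandR false (nS S ∪ Γ) Δt a b j).eqseq rfl (Finset.insert_eq_self.2 hΔ)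
  | norL c Γ Δ0 a b hp ih =>
      intro hc S Δt hsub
      have j := ih hc S (insert a (insert b Δt)) (ext1 (ext1 hsub))
      exact (gTS4.norL false (nS S ∪ Γ) Δt a b j).eqseq
        (Finset.union_insert _ _ _).symm rfl
  | norR c Γ Δ0 a b h1 h2 ih1 ih2 =>
      intro hc S Δt hsub
      obtain ⟨hmem, hrest⟩ := Finset.insert_subset_iff.1 hsub
      have j1 := popIns (ih1 hc S Δt hrest)
      have j2 := popIns (ih2 hc S Δt hrest)
      rcases Finset.mem_union.1 hmem with hS | hΔ
      · have k := gTS4.nnL false (nS S ∪ Γ) Δt (a.or b) (gTS4.orL false (nS S ∪ Γ) Δt a b j1 j2)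
        exact k.eqseq
          (Finset.insert_eq_self.2 (Finset.mem_union_left _ (Finset.mem_image_of_mem _ hS))) rfl
      · exact (gTS4.norR false (nS S ∪ Γ) Δt a b j1 j2).eqseq rfl (Finset.insert_eq_self.2 hΔ)
  | nimpL c Γ Δ0 a b hp ih =>
      intro hc S Δt hsub
      have j := popIns (ih hc S (insert b Δt) (ext1 hsub))
      exact (gTS4.nimpL false (nS S ∪ Γ) Δt a b j).eqseq
        (Finset.union_insert _ _ _).symm rfl
  | nimpR c Γ Δ0 a b h1 h2 ih1 ih2 =>
      intro hc S Δt hsub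
      obtain ⟨hmem, hrest⟩ := Finset.insert_subset_iff.1 hsub
      have j1 := ih1 hc S (insert a Δt) (ext1 hrest)
      have j2 := popIns (ih2 hc S Δt hrest)
      rcases Finset.mem_union.1 hmem with hS | hΔ
      · have k := gTS4.nnL false (nS S ∪ Γ) Δt (a.imp b)
          (gTS4.impL false (nS S ∪ Γ) Δt a b j1 j2)
        exact k.eqseq
          (Finset.insert_eq_self.2 (Finset.mem_union_left _ (Finset.mem_image_of_mem _ hS))) rfl
      · exact (gTS4.nimpR false (nS S ∪ Γ) Δt a b j1 j2).eqseq rfl (Finset.insert_eq_self.2 hΔ)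
  | nboxLT c Γ₁ Γ₂ Δ₁ Δ₂ a hp ih =>
      intro hc S Δt hsub
      have hd1 : ∀ d ∈ Δ₁, Fml.dia d ∈ S ∪ Δt := fun d hd =>
        hsub (Finset.mem_union_left _ (Finset.mem_image_of_mem _ hd))
      have hd2 : ∀ d ∈ Δ₂, (Fml.box d).neg ∈ S ∪ Δt := fun d hd =>
        hsub (Finset.mem_union_right _ (Finset.mem_image_of_mem _ hd))
      exact ((coreBox (hc ▸ hp) S Δt hd1 hd2).2).eqseq (Finset.union_insert _ _ _).symm rfl
  | nboxR c Γ Δ0 a hp ih =>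
      intro hc S Δt hsub
      obtain ⟨hmem, hrest⟩ := Finset.insert_subset_iff.1 hsub
      have j := popIns (ih hc S Δt hrest)
      rcases Finset.mem_union.1 hmem with hS | hΔ
      · have k := gTS4.nnL false (nS S ∪ Γ) Δt a.box (gTS4.boxL false (nS S ∪ Γ) Δt a j)
        exact k.eqseq
          (Finset.insert_eq_self.2 (Finset.mem_union_left _ (Finset.mem_image_of_mem _ hS))) rfl
      · exact (gTS4.nboxR false (nS S ∪ Γ) Δt a j).eqseq rfl (Finset.insert_eq_self.2 hΔ)
  | ndiaL c Γ Δ0 a hp ih =>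
      intro hc S Δt hsub
      have j := ih hc S (insert a Δt) (ext1 hsub)
      exact (gTS4.ndiaL false (nS S ∪ Γ) Δt a j).eqseq
        (Finset.union_insert _ _ _).symm rfl
  | ndiaRT c Γ₁ Γ₂ Δ₁ Δ₂ a hp ih =>
      intro hc S Δt hsub
      obtain ⟨hmem, hrest⟩ := Finset.insert_subset_iff.1 hsub
      have hd1 : ∀ d ∈ Δ₁, Fml.dia d ∈ S ∪ Δt := fun d hd =>
        hrest (Finset.mem_union_left _ (Finset.mem_image_of_mem _ hd))
      have hd2 : ∀ d ∈ Δ₂, (Fml.box d).neg ∈ S ∪ Δt := fun d hd =>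
        hrest (Finset.mem_union_right _ (Finset.mem_image_of_mem _ hd))
      have hcore := coreDia (hc ▸ hp) S Δt hd1 hd2
      rcases Finset.mem_union.1 hmem with hS | hΔ
      · have k := gTS4.nnL false (nS S ∪ (boxS Γ₁ ∪ ndiaS Γ₂)) Δt a.dia hcore.2
        exact k.eqseq
          (Finset.insert_eq_self.2 (Finset.mem_union_left _ (Finset.mem_image_of_mem _ hS))) rfl
      · exact hcore.1.eqseq rfl (Finset.insert_eq_self.2 hΔ)

end NegLeftAdm

/-- (¬left) is admissible in cut-free gTS4. -/
theorem stmt18 (Γ Δ : Ctx) (α : Fml) (h : gTS4 false Γ (insert α Δ)) :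
    gTS4 false (insert α.neg Γ) Δ := by
  have j := key h rfl {α} Δ (by rw [← Finset.insert_eq])
  exact j.eqseq (by rw [nS, Finset.image_singleton, ← Finset.insert_eq]) rfl
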